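/- Let n ∈ ℕ, t ≥ 1, and let H = ((x^1,s^1),…,(x^t,s^t)) be a guessing history with candidate sets V_1,…,V_n. Then H is feasible (i.e., some secret (z,π) ∈ {0,1}^n × S_n is consistent with H) if and only if there exists a permutation π of [n] with π(j) ∈ V_j for all j ∈ [n]. -/
import Mathlib


/-- The score `f_{z,π}(x)`: the length of the longest common prefix of `x` and `z`
in the order imposed by `π` (positions are 0-indexed, so `π j` for `(j : ℕ) < i`
corresponds to the 1-indexed positions `π(1),…,π(i)`). -/
def score (n : ℕ) (z : Fin n → Bool) (π : Equiv.Perm (Fin n)) (x : Fin n → Bool) : ℕ :=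
  Nat.findGreatest (fun i => ∀ j : Fin n, (j : ℕ) < i → z (π j) = x (π j)) n

/-- The candidate set `V_j` of the guessing history `((x^1,s^1),…,(x^t,s^t))`:
`i ∉ V_j` iff one of the exclusion rules (1)–(3) applies. Here `j : Fin n` is the
0-indexed version of the 1-indexed position `j+1`, so e.g. `j ≤ s^h` reads
`(j : ℕ) + 1 ≤ s h` and `j − 1` reads `(j : ℕ)`. -/
def candidateSet (n t : ℕ) (x : Fin t → Fin n → Bool) (s : Fin t → ℕ) (j : Fin n) :
    Set (Fin n) :=
  {i | ¬ ((∃ h ℓ : Fin t, (j : ℕ) + 1 ≤ s h ∧ s h ≤ s ℓ ∧ x h i ≠ x ℓ i) ∨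
          (∃ h ℓ : Fin t, s h = (j : ℕ) ∧ s ℓ = (j : ℕ) ∧ x h i ≠ x ℓ i) ∨
          (∃ h ℓ : Fin t, s h = (j : ℕ) ∧ (j : ℕ) < s ℓ ∧ x h i = x ℓ i))}

lemma score_eq_iff {n : ℕ} (z : Fin n → Bool) (π : Equiv.Perm (Fin n)) (x : Fin n → Bool)
    {s : ℕ} (hsn : s ≤ n) :
    score n z π x = s ↔
      (∀ j : Fin n, (j : ℕ) < s → z (π j) = x (π j)) ∧
      ∀ h : s < n, z (π ⟨s, h⟩) ≠ x (π ⟨s, h⟩) := by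
  unfold score
  rw [Nat.findGreatest_eq_iff]
  constructor
  · rintro ⟨-, hP, hmax⟩
    constructor
    · intro j hj
      exact hP (by omega) j hj
    · intro h hcontra
      refine hmax (Nat.lt_succ_self s) h ?_
      intro j hj
      rcases Nat.lt_or_ge (j : ℕ) s with hlt | hge
      · exact hP (by omega) j hlt
      · have hje : j = ⟨s, h⟩ := Fin.ext (show (j : ℕ) = s by omega)
        rw [hje]; exact hcontra
  · rintro ⟨h1, h2⟩
    refine ⟨hsn, fun _ => fun j hj => h1 j hj, ?_⟩
    intro m hm hmn hP
    have hsn' : s < n := by omega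
    exact h2 hsn' (hP ⟨s, hsn'⟩ (by simpa using hm))

/-- A guessing history is feasible (some secret is consistent with it) iff there is a
permutation `π` with `π(j) ∈ V_j` for all `j`. -/
theorem feasible_iff_system_of_representatives (n t : ℕ) (ht : 1 ≤ t)
    (x : Fin t → Fin n → Bool) (s : Fin t → ℕ) (hs : ∀ i, s i ≤ n) :
    (∃ (z : Fin n → Bool) (π : Equiv.Perm (Fin n)), ∀ i, score n z π (x i) = s i) ↔
      ∃ π : Equiv.Perm (Fin n), ∀ j : Fin n, π j ∈ candidateSet n t x s j := by
  classical
  constructor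
  · rintro ⟨z, π, hc⟩
    refine ⟨π, fun j => ?_⟩
    have agree : ∀ (i : Fin t) (j : Fin n), (j : ℕ) < s i → z (π j) = x i (π j) :=
      fun i => ((score_eq_iff z π (x i) (hs i)).mp (hc i)).1
    have diff : ∀ (i : Fin t) (h : s i < n), z (π ⟨s i, h⟩) ≠ x i (π ⟨s i, h⟩) :=
      fun i => ((score_eq_iff z π (x i) (hs i)).mp (hc i)).2
    simp only [candidateSet, Set.mem_setOf_eq]
    rintro (⟨h, ℓ, h1, h2, h3⟩ | ⟨h, ℓ, h1, h2, h3⟩ | ⟨h, ℓ, h1, h2, h3⟩)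
    · exact h3 ((agree h j (by omega)).symm.trans (agree ℓ j (by omega)))
    · have hj : s h < n := by rw [h1]; exact j.isLt
      have e1 : (⟨s h, hj⟩ : Fin n) = j := Fin.ext h1
      have hj2 : s ℓ < n := by rw [h2]; exact j.isLt
      have e2 : (⟨s ℓ, hj2⟩ : Fin n) = j := Fin.ext h2
      have d1 := diff h hj
      have d2 := diff ℓ hj2
      rw [e1] at d1
      rw [e2] at d2
      revert d1 d2 h3
      cases z (π j) <;> cases x h (π j) <;> cases x ℓ (π j) <;> simp
    · have hj : s h < n := by rw [h1]; exact j.isLt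
      have e1 : (⟨s h, hj⟩ : Fin n) = j := Fin.ext h1
      have d1 := diff h hj
      rw [e1] at d1
      exact d1 ((agree ℓ j (by omega)).trans h3.symm)
  · rintro ⟨π, hV⟩
    -- extract the non-violation facts
    have not1 : ∀ (j : Fin n) (h ℓ : Fin t), (j : ℕ) + 1 ≤ s h → s h ≤ s ℓ →
        x h (π j) = x ℓ (π j) := by
      intro j h ℓ hh hl
      have := hV j
      simp only [candidateSet, Set.mem_setOf_eq] at this
      push_neg at this
      exact this.1 h ℓ hh hl
    have eq1 : ∀ (j : Fin n) (h ℓ : Fin t), (j : ℕ) < s h → (j : ℕ) < s ℓ →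
        x h (π j) = x ℓ (π j) := by
      intro j h ℓ hh hl
      rcases le_total (s h) (s ℓ) with hle | hle
      · exact not1 j h ℓ (by omega) hle
      · exact (not1 j ℓ h (by omega) hle).symm
    have not2 : ∀ (j : Fin n) (h ℓ : Fin t), s h = (j : ℕ) → s ℓ = (j : ℕ) →
        x h (π j) = x ℓ (π j) := by
      intro j h ℓ hh hl
      have := hV j
      simp only [candidateSet, Set.mem_setOf_eq] at this
      push_neg at this
      exact this.2.1 h ℓ hh hl
    have not3 : ∀ (j : Fin n) (h ℓ : Fin t), s h = (j : ℕ) → (j : ℕ) < s ℓ →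
        x h (π j) ≠ x ℓ (π j) := by
      intro j h ℓ hh hl
      have := hV j
      simp only [candidateSet, Set.mem_setOf_eq] at this
      push_neg at this
      exact this.2.2 h ℓ hh hl
    set g : Fin n → Bool := fun j =>
      if h : ∃ ℓ, (j : ℕ) < s ℓ then x h.choose (π j)
      else if h2 : ∃ ℓ, s ℓ = (j : ℕ) then !(x h2.choose (π j)) else false with hg
    refine ⟨fun p => g (π.symm p), π, fun i => ?_⟩
    rw [score_eq_iff _ _ _ (hs i)]
    constructor
    · intro j hj
      simp only [Equiv.symm_apply_apply]
      have hex : ∃ ℓ, (j : ℕ) < s ℓ := ⟨i, hj⟩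
      rw [hg]
      simp only [dif_pos hex]
      exact eq1 j hex.choose i hex.choose_spec hj
    · intro h
      set j : Fin n := ⟨s i, h⟩ with hj
      have hji : s i = (j : ℕ) := rfl
      simp only [Equiv.symm_apply_apply]
      rw [hg]
      by_cases hex : ∃ ℓ, (j : ℕ) < s ℓ
      · simp only [dif_pos hex]
        exact fun hc => not3 j i hex.choose hji.symm hex.choose_spec (hc.symm) |>.elim
      · have hex2 : ∃ ℓ, s ℓ = (j : ℕ) := ⟨i, hji⟩
        simp only [dif_neg hex, dif_pos hex2]
        have := not2 j hex2.choose i hex2.choose_spec hji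
        rw [this]
        cases x i (π j) <;> simp
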